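/- arXiv:2110.08888 — 2 statements merged into one kernel-verified Lean document; each statement's English description precedes it below -/
import Mathlib

section
/- Let K be a field of characteristic p > 0. For each i, the operator P_i on K[z_1,...,z_n] defined by P_i(f) = z_i^{p−1}·∂_i^{p−1}(f) satisfies P_i ∘ P_i = −P_i. -/
open MvPolynomial

/-- The operator `P_i(f) = z_i^{p-1} ∂_i^{p-1}(f)` on `K[z_1,…,z_n]`. -/
noncomputable def Pi_op (K : Type) [CommRing K] {n : ℕ} (p : ℕ) (i : Fin n)
    (f : MvPolynomial (Fin n) K) : MvPolynomial (Fin n) K :=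
  X i ^ (p - 1) * (fun g => pderiv i g)^[p - 1] f

/-!
On a monomial `z^s`, `P_i` acts as multiplication by the descending factorial
`c = s_i (s_i - 1) ⋯ (s_i - p + 2)`. Modulo `p` this only depends on `s_i mod p`: it vanishes
unless `s_i ≡ -1`, in which case it is `(p - 1)! = -1` by Wilson's theorem. Hence `c² = -c`.
-/

open scoped Nat

section DescFactorial

variable {R : Type*} [Ring R] (p : ℕ) [CharP R p]

theorem Nat.cast_descFactorial_eq_cast_descFactorial_mod (k m : ℕ) :
    (k.descFactorial m : R) = ((k % p).descFactorial m : R) := by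
  rw [← descPochhammer_eval_eq_descFactorial, ← descPochhammer_eval_eq_descFactorial,
    ← CharP.natCast_eq_natCast_mod R p]

theorem Nat.cast_factorial_pred_eq_neg_one [Fact p.Prime] : ((p - 1)! : R) = -1 := by
  rw [← map_natCast (ZMod.castHom (dvd_refl p) R), ZMod.wilsons_lemma, map_neg, map_one]

theorem Nat.cast_descFactorial_pred_mul_self [Fact p.Prime] (k : ℕ) :
    (k.descFactorial (p - 1) : R) * k.descFactorial (p - 1) = -k.descFactorial (p - 1) := by
  rw [Nat.cast_descFactorial_eq_cast_descFactorial_mod p]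
  have hmod : k % p ≤ p - 1 := Nat.le_pred_of_lt (Nat.mod_lt _ (Fact.out : p.Prime).pos)
  rcases hmod.lt_or_eq with hlt | heq
  · simp [Nat.descFactorial_eq_zero_iff_lt.2 hlt]
  · rw [heq, Nat.descFactorial_self, Nat.cast_factorial_pred_eq_neg_one, mul_neg_one]

end DescFactorial

theorem MvPolynomial.iterate_pderiv_monomial {R σ : Type*} [CommSemiring R] (i : σ) (m : ℕ)
    (s : σ →₀ ℕ) (a : R) :
    (pderiv i)^[m] (monomial s a) =
      monomial (s - Finsupp.single i m) ((s i).descFactorial m * a) := by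
  induction m with
  | zero => simp
  | succ m ih =>
    rw [Function.iterate_succ_apply', ih, pderiv_monomial, tsub_tsub, ← Finsupp.single_add,
      Finsupp.tsub_apply, Finsupp.single_eq_same, Nat.descFactorial_succ, Nat.cast_mul]
    congr 1
    ring

section Pi_op

variable {K : Type} [CommRing K] {n : ℕ} (p : ℕ) (i : Fin n)

theorem Pi_op_monomial (s : Fin n →₀ ℕ) (a : K) :
    Pi_op K p i (monomial s a) = monomial s ((s i).descFactorial (p - 1) * a) := by
  rw [Pi_op, iterate_pderiv_monomial, X_pow_eq_monomial, monomial_mul, one_mul]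
  rcases le_or_gt (p - 1) (s i) with hle | hlt
  · rw [add_tsub_cancel_of_le (Finsupp.single_le_iff.2 hle)]
  · simp [Nat.descFactorial_eq_zero_iff_lt.2 hlt]

theorem Pi_op_add (f g : MvPolynomial (Fin n) K) :
    Pi_op K p i (f + g) = Pi_op K p i f + Pi_op K p i g := by
  rw [Pi_op, Pi_op, Pi_op, ← mul_add]
  exact congrArg _ (iterate_map_add (pderiv i).toAddMonoidHom _ f g)

end Pi_op

/-- Over a field of characteristic `p > 0`, `P_i ∘ P_i = -P_i`. -/
theorem Pi_op_comp_self (K : Type) [Field K] (p n : ℕ) [CharP K p] (hp : 0 < p)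
    (i : Fin n) (f : MvPolynomial (Fin n) K) :
    Pi_op K p i (Pi_op K p i f) = - Pi_op K p i f := by
  have : NeZero p := NeZero.of_pos hp
  have := CharP.char_is_prime_of_pos K p
  induction f using MvPolynomial.induction_on' with
  | monomial s a =>
    rw [Pi_op_monomial, Pi_op_monomial, ← mul_assoc, Nat.cast_descFactorial_pred_mul_self p,
      neg_mul, map_neg]
  | add f g hf hg => rw [Pi_op_add, Pi_op_add, hf, hg, neg_add]
end

section
/- Let K be a field of characteristic p > 0 and ω = Σ_I a_I dz_I a closed polynomial r-form on K^n. If for each multi-index I = (i_1 < ... < i_r) there exists s ∈ {1,...,r} with ∂_{i_s}^{p−1}(a_I) = 0, then ω is exact. -/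
open MvPolynomial

/-- An `r`-form in `n` variables with coefficients in `R`, written in the standard basis of the
`dz_I` indexed by the `r`-element subsets `I` of the set of variables. -/
abbrev GForm (R : Type) (n r : ℕ) := {s : Finset (Fin n) // s.card = r} → R

/-- The exterior derivative of an `r`-form, relative to a family `D` of partial derivatives:
`(dω)_T = ∑_{j ∈ T} (-1)^{pos of j in T} D_j ω_{T∖{j}}`. -/
noncomputable def gextd {R : Type} [CommRing R] {n r : ℕ} (D : Fin n → R → R)
    (ω : GForm R n r) : GForm R n (r + 1) :=
  fun T => ∑ j ∈ T.1.attach,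
    (-1 : R) ^ ((T.1.filter (fun k => k < j.1)).card) *
      D j.1 (ω ⟨T.1.erase j.1, by rw [Finset.card_erase_of_mem j.2, T.2]; rfl⟩)

/-- The iterated operator `∂_{i_1}^{p-1} ⋯ ∂_{i_r}^{p-1}` for `T = {i_1 < … < i_r}`. -/
def gpdSet {R : Type} {n : ℕ} (D : Fin n → R → R) (p : ℕ) (T : Finset (Fin n)) (f : R) : R :=
  (T.sort (· ≤ ·)).foldr (fun i g => (D i)^[p - 1] g) f

/-- The family of formal partial derivatives on `K[z_1,…,z_n]`. -/
noncomputable def pderivFam (K : Type) [CommRing K] (n : ℕ) :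
    Fin n → MvPolynomial (Fin n) K → MvPolynomial (Fin n) K :=
  fun i f => pderiv i f

/-!
Write `ω = ∑ c T u • z^u dz_T` and call `w = u + 𝟙_T` the weight of `z^u dz_T`; the exterior
derivative preserves weights. If `w i ≠ 0` in `K`, the operator `h_i` integrating in `z_i`
satisfies `d h_i + h_i d = id` on weight `w`. Choosing `i` as a function of `w` alone glues these
into one homotopy `h`, so `d (h ω) = ω` on every weight with such an index. On the remaining
weights, `p ∣ u i + 1` for all `i ∈ T`, and the hypothesis kills `c T u`: `∂_i^{p-1}` sends `z^u`
to `u i (u i - 1) ⋯ (u i - p + 2) • z^(u - (p-1) e_i)`, a nonzero multiple since `u i ≡ -1 [MOD p]`.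
-/

open Finset

namespace MvPolynomial

variable {σ : Type*}

theorem coeff_iterate_pderiv {R : Type*} [CommSemiring R] (i : σ) (k : ℕ)
    (f : MvPolynomial σ R) (m : σ →₀ ℕ) :
    coeff m ((pderiv i)^[k] f) =
      coeff (m + Finsupp.single i k) f * ∏ t ∈ range k, ((m i + t + 1 : ℕ) : R) := by
  induction k generalizing m with
  | zero => simp
  | succ k ih =>
    rw [Function.iterate_succ_apply', coeff_pderiv, ih, prod_range_succ', add_assoc,
      ← Finsupp.single_add, add_comm 1 k]
    simp [add_assoc, add_comm 1, mul_assoc]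

theorem coeff_eq_zero_of_iterate_pderiv_eq_zero {K : Type*} [Field K] (p : ℕ) [CharP K p]
    {i : σ} {f : MvPolynomial σ K} (hf : (pderiv i)^[p - 1] f = 0) {u : σ →₀ ℕ}
    (hu : ((u i + 1 : ℕ) : K) = 0) : coeff u f = 0 := by
  have hpu : p ∣ u i + 1 := (CharP.cast_eq_zero_iff K p _).mp hu
  have hle : p ≤ u i + 1 := Nat.le_of_dvd (Nat.succ_pos _) hpu
  set m := u - Finsupp.single i (p - 1)
  have hm : m + Finsupp.single i (p - 1) = u :=
    tsub_add_cancel_of_le (Finsupp.single_le_iff.mpr (by omega))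
  have hmi : m i + (p - 1) = u i := by rw [← hm]; simp
  have hfactor : ∀ t ∈ range (p - 1), ((m i + t + 1 : ℕ) : K) ≠ 0 := by
    intro t ht hzero
    have hdvd : p ∣ m i + t + 1 := (CharP.cast_eq_zero_iff K p _).mp hzero
    rw [mem_range] at ht
    -- `u i + 1 = (m i + t + 1) + (p - 1 - t)` and `0 < p - 1 - t < p`.
    have : p ∣ p - 1 - t := (Nat.dvd_add_right hdvd).mp (by convert hpu using 1; omega)
    exact absurd (Nat.le_of_dvd (by omega) this) (by omega)
  have := congrArg (coeff m) hf
  rw [coeff_iterate_pderiv, hm, coeff_zero] at this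
  exact (mul_eq_zero.mp this).resolve_right (prod_ne_zero_iff.mpr hfactor)

theorem neg_one_pow_eq_C {R : Type*} [CommRing R] (k : ℕ) :
    (-1 : MvPolynomial σ R) ^ k = C ((-1) ^ k) := by
  simp

end MvPolynomial

theorem Finsupp.add_single_tsub_single_comm {α : Type*} (u : α →₀ ℕ) {i j : α} (hij : i ≠ j) :
    u + single j 1 - single i 1 = u - single i 1 + single j 1 := by
  classical
  ext x
  simp only [add_apply, tsub_apply, single_apply]
  split_ifs with h1 h2 <;> subst_vars <;> first | omega | exact absurd rfl hij

section PositionSign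

variable {ι : Type*} [LinearOrder ι] (R : Type*) [CommRing R]

def posSign (T : Finset ι) (j : ι) : R := (-1) ^ #{k ∈ T | k < j}

variable {R} {T : Finset ι} {i j : ι}

theorem posSign_mul_self (T : Finset ι) (i : ι) : posSign R T i * posSign R T i = 1 := by
  simp [posSign, ← mul_pow]

theorem posSign_erase_self : posSign R (T.erase i) i = posSign R T i := by
  rw [posSign, filter_erase, erase_eq_of_notMem (by simp), posSign]

theorem posSign_insert_self : posSign R (insert i T) i = posSign R T i := by
  rw [posSign, filter_insert, if_neg (lt_irrefl i), posSign]

theorem posSign_erase (hj : j ∈ T) :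
    posSign R (T.erase j) i = if j < i then -posSign R T i else posSign R T i := by
  unfold posSign
  rw [filter_erase]
  split_ifs with hji
  · rw [← card_erase_add_one (mem_filter.mpr ⟨hj, hji⟩), pow_succ]
    ring
  · rw [erase_eq_of_notMem (a := j) (by simp [hji])]

theorem posSign_insert (hi : i ∉ T) :
    posSign R (insert i T) j = if i < j then -posSign R T j else posSign R T j := by
  unfold posSign
  rw [filter_insert]
  split_ifs with hij
  · rw [card_insert_of_notMem (fun h => hi (mem_filter.mp h).1), pow_succ]
    ring
  · rfl

theorem posSign_mul_posSign_erase (hi : i ∉ T) (hj : j ∈ T) :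
    posSign R T j * posSign R (T.erase j) i = -(posSign R T i * posSign R (insert i T) j) := by
  have hij : i ≠ j := fun h => hi (h ▸ hj)
  rw [posSign_erase hj, posSign_insert hi]
  rcases hij.lt_or_gt with h | h
  · simp [h, h.not_gt, mul_comm]
  · simp [h, h.not_gt, mul_comm]

end PositionSign

section CoefficientArrays

variable {ι K : Type*} [LinearOrder ι] [Field K]

-- `c T u` stands for the coefficient of `z^u dz_T` in a form with coefficients in `K`.
noncomputable def extDerivCoeff (c : Finset ι → (ι →₀ ℕ) → K) (T : Finset ι) (u : ι →₀ ℕ) : K :=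
  ∑ j ∈ T, posSign K T j * (u j + 1) * c (T.erase j) (u + Finsupp.single j 1)

noncomputable def antiderivCoeff (i : ι) (c : Finset ι → (ι →₀ ℕ) → K) (J : Finset ι)
    (v : ι →₀ ℕ) : K :=
  if i ∈ J then 0 else posSign K J i * (v i : K)⁻¹ * c (insert i J) (v - Finsupp.single i 1)

def weight (T : Finset ι) (u : ι →₀ ℕ) (i : ι) : ℕ := u i + if i ∈ T then 1 else 0

variable {i : ι} {T : Finset ι} {u : ι →₀ ℕ}

theorem extDerivCoeff_antiderivCoeff_of_mem (c : Finset ι → (ι →₀ ℕ) → K) (hi : i ∈ T)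
    (hu : (u i : K) + 1 ≠ 0) : extDerivCoeff (antiderivCoeff i c) T u = c T u := by
  rw [extDerivCoeff, sum_eq_single_of_mem i hi]
  · simp only [antiderivCoeff, if_neg (notMem_erase i T), insert_erase hi, posSign_erase_self,
      Finsupp.add_apply, Finsupp.single_eq_same, add_tsub_cancel_right, Nat.cast_add,
      Nat.cast_one]
    linear_combination (c T u * (u i + 1 : K)⁻¹ * (u i + 1)) * posSign_mul_self (R := K) T i
      + c T u * mul_inv_cancel₀ hu
  · intro j hj hji
    rw [antiderivCoeff, if_pos (mem_erase.mpr ⟨Ne.symm hji, hi⟩), mul_zero]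

theorem extDerivCoeff_antiderivCoeff_add_of_notMem (c : Finset ι → (ι →₀ ℕ) → K) (hi : i ∉ T)
    (hu : (u i : K) ≠ 0) :
    extDerivCoeff (antiderivCoeff i c) T u + antiderivCoeff i (extDerivCoeff c) T u = c T u := by
  set u' := u - Finsupp.single i 1
  have hui : 1 ≤ u i := Nat.one_le_iff_ne_zero.mpr (by rintro h; simp [h] at hu)
  have hu' : u' + Finsupp.single i 1 = u := tsub_add_cancel_of_le (Finsupp.single_le_iff.mpr hui)
  have hu'i : (u' i : K) + 1 = u i := by
    rw [← hu']
    simp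
  set S := ∑ j ∈ T, posSign K (insert i T) j * (u' j + 1) * c ((insert i T).erase j)
    (u' + Finsupp.single j 1)
  -- The terms of `d (h_i c)` cancel those of `h_i (d c)` indexed by `j ∈ T`.
  have hcancel : extDerivCoeff (antiderivCoeff i c) T u = -(posSign K T i * (u i : K)⁻¹ * S) := by
    rw [mul_sum, ← sum_neg_distrib]
    refine sum_congr rfl fun j hj => ?_
    have hij : i ≠ j := fun h => hi (h ▸ hj)
    have hu'j : u' j = u j := by simp [u', hij]
    rw [antiderivCoeff, if_neg (fun h => hi (mem_of_mem_erase h)), Finsupp.add_apply,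
      Finsupp.single_eq_of_ne hij, add_zero, Finsupp.add_single_tsub_single_comm u hij,
      ← erase_insert_of_ne hij, hu'j]
    linear_combination (u j + 1 : K) * (u i : K)⁻¹
      * c ((insert i T).erase j) (u' + Finsupp.single j 1)
      * posSign_mul_posSign_erase (R := K) hi hj
  rw [hcancel, antiderivCoeff, if_neg hi, extDerivCoeff, sum_insert hi, posSign_insert_self,
    erase_insert hi, hu', hu'i]
  linear_combination (c T u * (u i : K)⁻¹ * u i) * posSign_mul_self (R := K) T i
    + c T u * mul_inv_cancel₀ hu

variable {c : Finset ι → (ι →₀ ℕ) → K}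

theorem weight_erase_add_single {j : ι} (hj : j ∈ T) :
    weight (T.erase j) (u + Finsupp.single j 1) = weight T u := by
  funext x
  by_cases hx : x = j
  · subst hx
    simp [weight, hj]
  · simp [weight, hx]

theorem extDerivCoeff_antiderivCoeff_add (c : Finset ι → (ι →₀ ℕ) → K)
    (hi : (weight T u i : K) ≠ 0) :
    extDerivCoeff (antiderivCoeff i c) T u + antiderivCoeff i (extDerivCoeff c) T u = c T u := by
  by_cases hiT : i ∈ T
  · rw [antiderivCoeff, if_pos hiT, add_zero]
    exact extDerivCoeff_antiderivCoeff_of_mem c hiT (by simpa [weight, hiT] using hi)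
  · exact extDerivCoeff_antiderivCoeff_add_of_notMem c hiT (by simpa [weight, hiT] using hi)

-- The pivot `i` depends only on the weight, which `extDerivCoeff` preserves.
open Classical in
noncomputable def homotopyCoeff (c : Finset ι → (ι →₀ ℕ) → K) (J : Finset ι) (v : ι →₀ ℕ) : K :=
  if h : ∃ i, (weight J v i : K) ≠ 0 then antiderivCoeff h.choose c J v else 0

theorem extDerivCoeff_homotopyCoeff (hclosed : extDerivCoeff c = 0)
    (hnull : ∀ T u, (∀ i, (weight T u i : K) = 0) → c T u = 0) :
    extDerivCoeff (homotopyCoeff c) = c := by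
  classical
  funext T u
  have hshift : ∀ j ∈ T, homotopyCoeff c (T.erase j) (u + Finsupp.single j 1) =
      if h : ∃ i, (weight T u i : K) ≠ 0 then
        antiderivCoeff h.choose c (T.erase j) (u + Finsupp.single j 1) else 0 := by
    intro j hj
    simp only [homotopyCoeff, weight_erase_add_single hj]
  by_cases h : ∃ i, (weight T u i : K) ≠ 0
  · have hformula := extDerivCoeff_antiderivCoeff_add c h.choose_spec
    rw [hclosed] at hformula
    calc extDerivCoeff (homotopyCoeff c) T u
        = extDerivCoeff (antiderivCoeff h.choose c) T u :=
          sum_congr rfl fun j hj => by rw [hshift j hj, dif_pos h]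
      _ = c T u := by simpa [antiderivCoeff] using hformula
  · rw [hnull T u fun i => not_not.mp (not_exists.mp h i)]
    exact sum_eq_zero fun j hj => by rw [hshift j hj, dif_neg h, mul_zero]

theorem support_antiderivCoeff_subset (i : ι) (c : Finset ι → (ι →₀ ℕ) → K) (J : Finset ι) :
    Function.support (antiderivCoeff i c J) ⊆
      (· + Finsupp.single i 1) '' Function.support (c (insert i J)) := by
  intro v hv
  rw [Function.mem_support, antiderivCoeff] at hv
  split_ifs at hv with hiJ
  · exact absurd rfl hv
  have hvi : v i ≠ 0 := by
    rintro h
    simp [h] at hv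
  exact ⟨v - Finsupp.single i 1, fun h => hv (by rw [h, mul_zero]),
    tsub_add_cancel_of_le (Finsupp.single_le_iff.mpr (Nat.one_le_iff_ne_zero.mpr hvi))⟩

theorem support_homotopyCoeff_subset (c : Finset ι → (ι →₀ ℕ) → K) (J : Finset ι) :
    Function.support (homotopyCoeff c J) ⊆
      ⋃ i, (· + Finsupp.single i 1) '' Function.support (c (insert i J)) := by
  intro v hv
  rw [Function.mem_support, homotopyCoeff] at hv
  split_ifs at hv with h
  · exact Set.mem_iUnion.mpr ⟨_, support_antiderivCoeff_subset _ c J hv⟩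
  · exact absurd rfl hv

theorem finite_support_homotopyCoeff [Finite ι] (hc : ∀ J, (Function.support (c J)).Finite)
    (J : Finset ι) : (Function.support (homotopyCoeff c J)).Finite :=
  (Set.finite_iUnion fun _ => (hc _).image _).subset (support_homotopyCoeff_subset c J)

theorem homotopyCoeff_eq_zero_of_card_ne {r : ℕ} (hc : ∀ T : Finset ι, #T ≠ r + 1 → c T = 0)
    {J : Finset ι} (hJ : #J ≠ r) : homotopyCoeff c J = 0 := by
  funext v
  rw [homotopyCoeff]
  split_ifs with h
  · rw [antiderivCoeff]
    split_ifs with hiJ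
    · rfl
    · rw [hc _ (by rwa [card_insert_of_notMem hiJ, Ne, Nat.add_right_cancel_iff]),
        Pi.zero_apply, mul_zero, Pi.zero_apply]
  · rfl

end CoefficientArrays

section Forms

variable {K : Type} [Field K] {n r : ℕ}

noncomputable def formCoeff (θ : GForm (MvPolynomial (Fin n) K) n r) :
    Finset (Fin n) → (Fin n →₀ ℕ) → K :=
  fun J v => if h : #J = r then coeff v (θ ⟨J, h⟩) else 0

theorem formCoeff_of_card_eq (θ : GForm (MvPolynomial (Fin n) K) n r) {J : Finset (Fin n)}
    (h : #J = r) (v : Fin n →₀ ℕ) : formCoeff θ J v = coeff v (θ ⟨J, h⟩) :=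
  dif_pos h

theorem formCoeff_of_card_ne (θ : GForm (MvPolynomial (Fin n) K) n r) {J : Finset (Fin n)}
    (h : #J ≠ r) : formCoeff θ J = 0 :=
  funext fun _ => dif_neg h

theorem formCoeff_injective :
    Function.Injective (formCoeff : GForm (MvPolynomial (Fin n) K) n r → _) := by
  intro θ₁ θ₂ h
  funext J
  ext v
  simpa [formCoeff_of_card_eq _ J.2] using congrFun (congrFun h J.1) v

theorem finite_support_formCoeff (θ : GForm (MvPolynomial (Fin n) K) n r) (J : Finset (Fin n)) :
    (Function.support (formCoeff θ J)).Finite := by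
  by_cases h : #J = r
  · refine (θ ⟨J, h⟩).support.finite_toSet.subset fun v hv => ?_
    rw [Function.mem_support, formCoeff_of_card_eq θ h] at hv
    exact mem_support_iff.mpr hv
  · simp [formCoeff_of_card_ne θ h]

theorem formCoeff_gextd (θ : GForm (MvPolynomial (Fin n) K) n r) :
    formCoeff (gextd (pderivFam K n) θ) = extDerivCoeff (formCoeff θ) := by
  funext T u
  by_cases hT : #T = r + 1
  · rw [formCoeff_of_card_eq _ hT, gextd, coeff_sum, extDerivCoeff, ← sum_attach T]
    refine sum_congr rfl fun j _ => ?_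
    have hj : #(T.erase j) = r := by rw [card_erase_of_mem j.2, hT, Nat.add_sub_cancel]
    rw [formCoeff_of_card_eq θ hj, neg_one_pow_eq_C, coeff_C_mul, pderivFam, coeff_pderiv,
      posSign]
    ring
  · rw [formCoeff_of_card_ne _ hT]
    refine (sum_eq_zero fun j hj => ?_).symm
    have hj : #(T.erase j) ≠ r := by
      have := card_pos.mpr ⟨j, hj⟩
      rw [card_erase_of_mem hj]
      omega
    rw [formCoeff_of_card_ne θ hj, Pi.zero_apply, mul_zero]

noncomputable def formOfCoeff (c : Finset (Fin n) → (Fin n →₀ ℕ) → K)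
    (hc : ∀ J, (Function.support (c J)).Finite) : GForm (MvPolynomial (Fin n) K) n r :=
  fun J => AddMonoidAlgebra.ofCoeff (Finsupp.ofSupportFinite (c J.1) (hc J.1))

theorem formCoeff_formOfCoeff {c : Finset (Fin n) → (Fin n →₀ ℕ) → K}
    (hc : ∀ J, (Function.support (c J)).Finite) (hdeg : ∀ J, #J ≠ r → c J = 0) :
    formCoeff (formOfCoeff (r := r) c hc) = c := by
  funext J v
  by_cases h : #J = r
  · exact formCoeff_of_card_eq _ h v
  · rw [formCoeff_of_card_ne _ h, hdeg J h]
theorem formCoeff_eq_zero_of_forall_weight_eq_zero (p : ℕ) [CharP K p]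
    (ω : GForm (MvPolynomial (Fin n) K) n r)
    (h : ∀ T : {s : Finset (Fin n) // s.card = r}, ∃ i ∈ T.1, (pderiv i)^[p - 1] (ω T) = 0)
    (T : Finset (Fin n)) (u : Fin n →₀ ℕ) (hw : ∀ i, (weight T u i : K) = 0) :
    formCoeff ω T u = 0 := by
  by_cases hT : #T = r
  · obtain ⟨i, hi, hker⟩ := h ⟨T, hT⟩
    rw [formCoeff_of_card_eq ω hT]
    exact coeff_eq_zero_of_iterate_pderiv_eq_zero p hker (by simpa [weight, hi] using hw i)
  · rw [formCoeff_of_card_ne ω hT, Pi.zero_apply]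

end Forms

theorem closed_form_with_single_index_vanishing_is_exact_general
    (K : Type) [Field K] (p n r : ℕ) [CharP K p]
    (ω : GForm (MvPolynomial (Fin n) K) n (r + 1))
    (hclosed : gextd (pderivFam K n) ω = 0)
    (h : ∀ T : {s : Finset (Fin n) // s.card = r + 1},
      ∃ i ∈ T.1, (fun g => pderiv i g)^[p - 1] (ω T) = 0) :
    ∃ η : GForm (MvPolynomial (Fin n) K) n r, gextd (pderivFam K n) η = ω := by
  have hdω : extDerivCoeff (formCoeff ω) = 0 := by
    rw [← formCoeff_gextd, hclosed]
    funext J v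
    simp [formCoeff]
  have hfin := finite_support_homotopyCoeff (finite_support_formCoeff ω)
  refine ⟨formOfCoeff _ hfin, formCoeff_injective ?_⟩
  rw [formCoeff_gextd, formCoeff_formOfCoeff hfin
    fun J => homotopyCoeff_eq_zero_of_card_ne fun T => formCoeff_of_card_ne ω]
  exact extDerivCoeff_homotopyCoeff hdω (formCoeff_eq_zero_of_forall_weight_eq_zero p ω h)

/-- Over a field `K` of characteristic `p > 0`, a closed polynomial `r`-form
(`r = r₀+1 ≥ 1`) each of whose coefficients `a_I` is killed by `∂_{i_s}^{p-1}` for some single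
index `i_s ∈ I` is exact. -/
theorem closed_form_with_single_index_vanishing_is_exact
    (K : Type) [Field K] (p n r : ℕ) [CharP K p] (hp : 0 < p)
    (ω : GForm (MvPolynomial (Fin n) K) n (r + 1))
    (hclosed : gextd (pderivFam K n) ω = 0)
    (h : ∀ T : {s : Finset (Fin n) // s.card = r + 1},
      ∃ i ∈ T.1, (fun g => pderiv i g)^[p - 1] (ω T) = 0) :
    ∃ η : GForm (MvPolynomial (Fin n) K) n r, gextd (pderivFam K n) η = ω :=
  closed_form_with_single_index_vanishing_is_exact_general K p n r ω hclosed h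
end
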